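/- For every Hurst parameter H ∈ (0,1/2) there exists a constant C > 0 such that for all ε ∈ (0,1] and all t > 0: σ_ou · ( ∫_t^∞ ε^{-1} 𝒦(s/ε)² ds )^{1/2} ≤ C · min(1, (ε/t)^{1−H}). Equivalently, with 𝒦^ε(s) := ε^{-1/2} 𝒦(s/ε), the tail quantity σ^ε_{t,∞} := σ_ou (∫_t^∞ 𝒦^ε(s)² ds)^{1/2} satisfies σ^ε_{t,∞} ≤ C (1 ∧ (ε/t)^{1−H}). -/

import Mathlib

open MeasureTheory Real Set

/-- `σ_ou = (2 sin(πH))^{-1/2}`. -/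
noncomputable def sigOU (H : ℝ) : ℝ := (2 * Real.sin (Real.pi * H)) ^ (-(1/2) : ℝ)

/-- The fOU moving-average kernel
`𝒦(t) = (σ_ou Γ(H+1/2))⁻¹ ( t^{H-1/2} − ∫₀^t (t−u)^{H-1/2} e^{-u} du )`. -/
noncomputable def fouKernel (H : ℝ) (t : ℝ) : ℝ :=
  (sigOU H * Real.Gamma (H + 1/2))⁻¹ *
    (t ^ (H - 1/2) - ∫ u in (0 : ℝ)..t, (t - u) ^ (H - 1/2) * Real.exp (-u))

/-!
Write `a = H - 1/2 ∈ (-1/2, 0)` and `g(t) = t^a - ∫₀^t (t-u)^a e^{-u} du`, so that `𝒦` is a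
constant multiple of `g`. For small `t` both terms of `g` are `O(t^a)`. For large `t`,
`g(t) = t^a e^{-t} - ∫₀^t ((t-u)^a - t^a) e^{-u} du`: on `[0, t/2]` the integrand is
`O(t^{a-1} u e^{-u})`, and on `[t/2, t]` the factor `e^{-u} ≤ e^{-t/2}` beats everything, so
`g(t) = O(t^{a-1})`. Hence `𝒦(r)² ≤ A min(r^{2H-1}, r^{2H-3})`, whose integral over `(x, ∞)` is
`O(min(1, x^{2H-2}))`. The substitution `s = εr` turns the scaled tail from `t` into this tail
from `x = t/ε`, and taking square roots gives the bound.
-/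

section

open intervalIntegral

lemma intervalIntegrable_sub_rpow {a : ℝ} (ha : -1 < a) (t : ℝ) :
    IntervalIntegrable (fun u => (t - u) ^ a) volume 0 t := by
  simpa using ((intervalIntegrable_rpow' (a := 0) (b := t) ha).comp_sub_left t).symm

lemma integral_sub_rpow {a : ℝ} (ha : -1 < a) (t : ℝ) :
    ∫ u in (0:ℝ)..t, (t - u) ^ a = t ^ (a + 1) / (a + 1) := by
  rw [intervalIntegral.integral_comp_sub_left (fun v => v ^ a), sub_self, sub_zero,
    integral_rpow (Or.inl ha), zero_rpow (by linarith), sub_zero]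

lemma integral_mul_exp_neg_le_one {c : ℝ} (hc : 0 ≤ c) : ∫ u in (0:ℝ)..c, u * exp (-u) ≤ 1 := by
  have hderiv : ∀ u ∈ uIcc 0 c, HasDerivAt (fun u => -((u + 1) * exp (-u))) (u * exp (-u)) u := by
    intro u _
    exact (((hasDerivAt_id' u).add_const 1).mul (hasDerivAt_neg' u).exp).neg.congr_deriv (by ring)
  rw [integral_eq_sub_of_hasDerivAt hderiv (by apply Continuous.intervalIntegrable; fun_prop)]
  have : 0 ≤ (c + 1) * exp (-c) := by positivity
  simp only [zero_add, neg_zero, exp_zero, mul_one]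
  linarith

lemma exp_neg_half_le {t : ℝ} (ht : 0 < t) : exp (-(t / 2)) ≤ 8 / t ^ 2 := by
  have := pow_div_factorial_le_exp (x := t / 2) (half_pos ht).le 2
  rw [exp_neg, inv_le_comm₀ (exp_pos _) (by positivity)]
  norm_num [Nat.factorial] at this ⊢
  linarith

lemma sub_rpow_sub_rpow_le {a t u : ℝ} (ha : -1 ≤ a) (ht : 0 < t) (hu : 0 ≤ u) (hut : u ≤ t / 2) :
    (t - u) ^ a - t ^ a ≤ 2 * t ^ (a - 1) * u := by
  -- `(1 - u/t)^a ≤ (1 - u/t)⁻¹ ≤ 1 + 2u/t`, as `a ≥ -1` and `u ≤ t/2`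
  have htu : 0 < t - u := by linarith
  have hratio : ((t - u) / t) ^ a ≤ ((t - u) / t) ^ (-1 : ℝ) :=
    rpow_le_rpow_of_exponent_ge (div_pos htu ht) (by rw [div_le_one ht]; linarith) ha
  rw [div_rpow htu.le ht.le, rpow_neg_one, inv_div, div_le_iff₀ (rpow_pos_of_pos ht a)] at hratio
  rw [rpow_sub_one ht.ne']
  have hta := rpow_pos_of_pos ht a
  calc (t - u) ^ a - t ^ a ≤ t / (t - u) * t ^ a - t ^ a := by linarith
    _ = t ^ a * u / (t - u) := by field_simp; ring
    _ ≤ t ^ a * u / (t / 2) := by gcongr; linarith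
    _ = 2 * (t ^ a / t) * u := by field_simp

end

/-- The bracket in `fouKernel`: `fouKernel H t = (sigOU H * Γ(H + 1/2))⁻¹ * fouProfile (H - 1/2) t`
holds by `rfl`. -/
noncomputable def fouProfile (a t : ℝ) : ℝ :=
  t ^ a - ∫ u in (0:ℝ)..t, (t - u) ^ a * exp (-u)

namespace fouProfile

open intervalIntegral

variable {a t : ℝ}

lemma intervalIntegrable_integrand (ha : -1 < a) (t : ℝ) :
    IntervalIntegrable (fun u => (t - u) ^ a * exp (-u)) volume 0 t :=
  (intervalIntegrable_sub_rpow ha t).mul_continuousOn (by fun_prop)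

lemma eq_sub_integral (ha : -1 < a) (t : ℝ) :
    fouProfile a t = t ^ a * exp (-t) - ∫ u in (0:ℝ)..t, ((t - u) ^ a - t ^ a) * exp (-u) := by
  have hexp : ∫ u in (0:ℝ)..t, exp (-u) = 1 - exp (-t) := by
    simp [integral_comp_neg (fun u => exp u)]
  simp_rw [sub_mul]
  rw [intervalIntegral.integral_sub (intervalIntegrable_integrand ha t)
    (Continuous.intervalIntegrable (by fun_prop) _ _),
    intervalIntegral.integral_const_mul, hexp, fouProfile]
  ring

lemma abs_le_rpow_add_rpow (ha : -1 < a) (ht : 0 ≤ t) :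
    |fouProfile a t| ≤ t ^ a + t ^ (a + 1) / (a + 1) := by
  set I := ∫ u in (0:ℝ)..t, (t - u) ^ a * exp (-u)
  have hnonneg : ∀ u ∈ Icc 0 t, 0 ≤ (t - u) ^ a * exp (-u) := fun u hu =>
    mul_nonneg (rpow_nonneg (by linarith [hu.2]) a) (exp_nonneg _)
  have hI0 : 0 ≤ I := integral_nonneg ht hnonneg
  have hI : I ≤ t ^ (a + 1) / (a + 1) := by
    rw [← integral_sub_rpow ha t]
    refine integral_mono_on ht (intervalIntegrable_integrand ha t)
      (intervalIntegrable_sub_rpow ha t) fun u hu => ?_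
    exact mul_le_of_le_one_right (rpow_nonneg (by linarith [hu.2]) a)
      (exp_le_one_iff.mpr (by linarith [hu.1]))
  calc |fouProfile a t| ≤ |t ^ a| + |I| := abs_sub _ _
    _ ≤ t ^ a + t ^ (a + 1) / (a + 1) := by
      rw [abs_of_nonneg (rpow_nonneg ht a), abs_of_nonneg hI0]; linarith

lemma intervalIntegrable_integrand_sub (ha : -1 < a) (t : ℝ) :
    IntervalIntegrable (fun u => ((t - u) ^ a - t ^ a) * exp (-u)) volume 0 t := by
  simp_rw [sub_mul]
  exact (intervalIntegrable_integrand ha t).sub (Continuous.intervalIntegrable (by fun_prop) _ _)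

lemma abs_integral_firstHalf_le (ha : -1 < a) (ha0 : a ≤ 0) (ht : 0 < t) :
    |∫ u in (0:ℝ)..t / 2, ((t - u) ^ a - t ^ a) * exp (-u)| ≤ 2 * t ^ (a - 1) := by
  have hhalf : t / 2 ∈ uIcc 0 t := by rw [uIcc_of_le ht.le]; constructor <;> linarith
  have hint := (intervalIntegrable_integrand_sub ha t).mono_set (uIcc_subset_uIcc_left hhalf)
  have hpos : ∀ u ∈ Icc 0 (t / 2), 0 ≤ ((t - u) ^ a - t ^ a) * exp (-u) := fun u hu =>
    mul_nonneg (sub_nonneg.mpr (rpow_le_rpow_of_nonpos (by linarith [hu.2])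
      (by linarith [hu.1]) ha0)) (exp_nonneg _)
  rw [abs_of_nonneg (integral_nonneg (by linarith) hpos)]
  calc ∫ u in (0:ℝ)..t / 2, ((t - u) ^ a - t ^ a) * exp (-u)
      ≤ ∫ u in (0:ℝ)..t / 2, 2 * t ^ (a - 1) * (u * exp (-u)) := by
        refine integral_mono_on (by linarith) hint (Continuous.intervalIntegrable (by fun_prop) _ _)
          fun u hu => ?_
        rw [← mul_assoc]
        exact mul_le_mul_of_nonneg_right (sub_rpow_sub_rpow_le ha.le ht hu.1 hu.2) (exp_nonneg _)
    _ ≤ 2 * t ^ (a - 1) := by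
        rw [intervalIntegral.integral_const_mul]
        exact mul_le_of_le_one_right (by positivity) (integral_mul_exp_neg_le_one (by linarith))

lemma abs_integral_secondHalf_le (ha : -1 < a) (ht : 0 < t) :
    |∫ u in t / 2..t, ((t - u) ^ a - t ^ a) * exp (-u)| ≤ 8 * (1 / (a + 1) + 1) * t ^ (a - 1) := by
  have hhalf : t / 2 ∈ uIcc 0 t := by rw [uIcc_of_le ht.le]; constructor <;> linarith
  have hint := (intervalIntegrable_integrand_sub ha t).mono_set (uIcc_subset_uIcc_right hhalf)
  have hmaj : IntervalIntegrable (fun u => ((t - u) ^ a + t ^ a) * exp (-(t / 2))) volume 0 t :=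
    ((intervalIntegrable_sub_rpow ha t).add intervalIntegrable_const).mul_const _
  have hmaj_nonneg : 0 ≤ᵐ[volume.restrict (Ioc 0 t)]
      fun u => ((t - u) ^ a + t ^ a) * exp (-(t / 2)) := by
    filter_upwards [ae_restrict_mem measurableSet_Ioc] with u hu
    exact mul_nonneg (add_nonneg (rpow_nonneg (by linarith [hu.2]) a) (rpow_nonneg ht.le a))
      (exp_nonneg _)
  have hpow : t ^ (a + 1) = t ^ (a - 1) * t ^ 2 := by
    rw [← rpow_natCast, ← rpow_add ht]; ring_nf
  calc |∫ u in t / 2..t, ((t - u) ^ a - t ^ a) * exp (-u)|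
      ≤ ∫ u in t / 2..t, |((t - u) ^ a - t ^ a) * exp (-u)| :=
        abs_integral_le_integral_abs (by linarith)
    _ ≤ ∫ u in t / 2..t, ((t - u) ^ a + t ^ a) * exp (-(t / 2)) := by
        refine integral_mono_on (by linarith) hint.abs
          (hmaj.mono_set (uIcc_subset_uIcc_right hhalf)) fun u hu => ?_
        have htu : 0 ≤ t - u := by linarith [hu.2]
        rw [abs_mul, abs_of_pos (exp_pos _)]
        gcongr
        · calc |(t - u) ^ a - t ^ a| ≤ |(t - u) ^ a| + |t ^ a| := abs_sub _ _
            _ = (t - u) ^ a + t ^ a := by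
              rw [abs_of_nonneg (rpow_nonneg htu a), abs_of_nonneg (rpow_nonneg ht.le a)]
        · linarith [hu.1]
    _ ≤ ∫ u in (0:ℝ)..t, ((t - u) ^ a + t ^ a) * exp (-(t / 2)) :=
        integral_mono_interval (by linarith) (by linarith) le_rfl hmaj_nonneg hmaj
    _ = (t ^ (a + 1) / (a + 1) + t ^ (a + 1)) * exp (-(t / 2)) := by
        rw [intervalIntegral.integral_mul_const, intervalIntegral.integral_add
          (intervalIntegrable_sub_rpow ha t) intervalIntegrable_const, integral_sub_rpow ha,
          intervalIntegral.integral_const, rpow_add_one ht.ne']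
        rw [sub_zero, smul_eq_mul]
        ring
    _ ≤ (t ^ (a + 1) / (a + 1) + t ^ (a + 1)) * (8 / t ^ 2) := by
        gcongr
        · have : 0 < a + 1 := by linarith
          positivity
        · exact exp_neg_half_le ht
    _ = 8 * (1 / (a + 1) + 1) * t ^ (a - 1) := by
        rw [hpow]; field_simp

lemma abs_le_rpow_sub_one (ha : -1 < a) (ha0 : a ≤ 0) (ht : 0 < t) :
    |fouProfile a t| ≤ (11 + 8 / (a + 1)) * t ^ (a - 1) := by
  have hhalf : t / 2 ∈ uIcc 0 t := by rw [uIcc_of_le ht.le]; constructor <;> linarith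
  have hsplit := integral_add_adjacent_intervals
    ((intervalIntegrable_integrand_sub ha t).mono_set (uIcc_subset_uIcc_left hhalf))
    ((intervalIntegrable_integrand_sub ha t).mono_set (uIcc_subset_uIcc_right hhalf))
  have hboundary : t ^ a * exp (-t) ≤ t ^ (a - 1) := by
    rw [rpow_sub_one ht.ne', div_eq_mul_inv, exp_neg]
    exact mul_le_mul_of_nonneg_left (inv_anti₀ ht (by linarith [add_one_le_exp t]))
      (rpow_nonneg ht.le a)
  rw [eq_sub_integral ha, ← hsplit]
  calc _ ≤ |t ^ a * exp (-t)| + (|∫ u in (0:ℝ)..t / 2, ((t - u) ^ a - t ^ a) * exp (-u)|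
          + |∫ u in t / 2..t, ((t - u) ^ a - t ^ a) * exp (-u)|) :=
        (abs_sub _ _).trans (by gcongr; exact abs_add_le _ _)
    _ ≤ t ^ (a - 1) + (2 * t ^ (a - 1) + 8 * (1 / (a + 1) + 1) * t ^ (a - 1)) := by
        rw [abs_of_nonneg (by positivity)]
        gcongr
        exacts [abs_integral_firstHalf_le ha ha0 ht, abs_integral_secondHalf_le ha ht]
    _ = (11 + 8 / (a + 1)) * t ^ (a - 1) := by ring

lemma abs_le_rpow (ha : -1 < a) (ha0 : a ≤ 0) (ht : 0 < t) :
    |fouProfile a t| ≤ (11 + 8 / (a + 1)) * t ^ a := by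
  have ha1 : 0 < a + 1 := by linarith
  rcases le_total t 1 with ht1 | ht1
  · have hpow : t ^ (a + 1) ≤ t ^ a := by
      rw [rpow_add_one ht.ne']
      exact mul_le_of_le_one_right (rpow_nonneg ht.le a) ht1
    calc |fouProfile a t| ≤ t ^ a + t ^ (a + 1) / (a + 1) := abs_le_rpow_add_rpow ha ht.le
      _ ≤ t ^ a + t ^ a / (a + 1) := by gcongr
      _ = (1 + 1 / (a + 1)) * t ^ a := by ring
      _ ≤ (11 + 8 / (a + 1)) * t ^ a := by
        gcongr ?_ * _
        have : 1 / (a + 1) ≤ 8 / (a + 1) := by gcongr; norm_num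
        linarith
  · exact (abs_le_rpow_sub_one ha ha0 ht).trans
      (mul_le_mul_of_nonneg_left (rpow_le_rpow_of_exponent_le ht1 (by linarith)) (by positivity))

end fouProfile

section

variable {p q : ℝ}

lemma integrableOn_min_rpow (hp : -1 < p) (hq : q < -1) :
    IntegrableOn (fun r : ℝ => min (r ^ p) (r ^ q)) (Ioi 0) := by
  have hmeas : AEStronglyMeasurable (fun r : ℝ => min (r ^ p) (r ^ q)) :=
    (by fun_prop : Measurable fun r : ℝ => min (r ^ p) (r ^ q)).aestronglyMeasurable
  rw [← Ioc_union_Ioi_eq_Ioi zero_le_one]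
  refine IntegrableOn.union
    ((intervalIntegral.intervalIntegrable_rpow' hp).1.mono' hmeas.restrict ?_)
    ((integrableOn_Ioi_rpow_of_lt hq one_pos).mono' hmeas.restrict ?_)
  · filter_upwards [ae_restrict_mem measurableSet_Ioc] with r hr
    rw [norm_of_nonneg (le_min (rpow_nonneg hr.1.le p) (rpow_nonneg hr.1.le q))]
    exact min_le_left _ _
  · filter_upwards [ae_restrict_mem measurableSet_Ioi] with r hr
    rw [norm_of_nonneg (le_min (rpow_nonneg (zero_le_one.trans hr.le) p)
      (rpow_nonneg (zero_le_one.trans hr.le) q))]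
    exact min_le_right _ _

lemma integral_min_rpow_le (hp : -1 < p) (hq : q < -1) :
    ∫ r in Ioi 0, min (r ^ p) (r ^ q) ≤ 1 / (p + 1) - 1 / (q + 1) := by
  have hint := integrableOn_min_rpow hp hq
  rw [← Ioc_union_Ioi_eq_Ioi zero_le_one] at hint ⊢
  rw [setIntegral_union (Ioc_disjoint_Ioi le_rfl) measurableSet_Ioi hint.left_of_union
    hint.right_of_union]
  have hlow : ∫ r in Ioc (0:ℝ) 1, min (r ^ p) (r ^ q) ≤ ∫ r in Ioc (0:ℝ) 1, r ^ p :=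
    setIntegral_mono_on hint.left_of_union (intervalIntegral.intervalIntegrable_rpow' hp).1
      measurableSet_Ioc fun r _ => min_le_left _ _
  have hhigh : ∫ r in Ioi (1:ℝ), min (r ^ p) (r ^ q) ≤ ∫ r in Ioi (1:ℝ), r ^ q :=
    setIntegral_mono_on hint.right_of_union (integrableOn_Ioi_rpow_of_lt hq one_pos)
      measurableSet_Ioi fun r _ => min_le_right _ _
  have hlow_eq : ∫ r in Ioc (0:ℝ) 1, r ^ p = 1 / (p + 1) := by
    rw [← intervalIntegral.integral_of_le zero_le_one, integral_rpow (Or.inl hp),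
      zero_rpow (by linarith), one_rpow, sub_zero]
  rw [integral_Ioi_rpow_of_lt hq one_pos, one_rpow] at hhigh
  rw [hlow_eq] at hlow
  linarith [neg_div (q + 1) 1]

lemma setIntegral_Ioi_le_mul_min {f : ℝ → ℝ} {A x : ℝ} (hp : -1 < p) (hq : q < -1)
    (hf0 : ∀ r > 0, 0 ≤ f r) (hf : ∀ r > 0, f r ≤ A * min (r ^ p) (r ^ q)) (hx : 0 < x) :
    ∫ r in Ioi x, f r ≤ A * (1 / (p + 1) - 1 / (q + 1)) * min 1 (x ^ (q + 1)) := by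
  have hA : 0 ≤ A := by simpa using (hf0 1 one_pos).trans (hf 1 one_pos)
  -- `integral_mono_of_nonneg` needs no integrability (or measurability) of `f` itself
  have hmono : ∀ {g : ℝ → ℝ}, IntegrableOn g (Ioi x) → (∀ r > 0, f r ≤ g r) →
      ∫ r in Ioi x, f r ≤ ∫ r in Ioi x, g r := fun hg hfg =>
    integral_mono_of_nonneg
      (by filter_upwards [ae_restrict_mem measurableSet_Ioi] with r hr using hf0 r (hx.trans hr))
      hg (by filter_upwards [ae_restrict_mem measurableSet_Ioi] with r hr using hfg r (hx.trans hr))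
  have hp1 : 0 < 1 / (p + 1) := one_div_pos.mpr (by linarith)
  have hq1 : 1 / (q + 1) < 0 := one_div_neg.mpr (by linarith)
  rw [mul_min_of_nonneg _ _ (mul_nonneg hA (by linarith)), mul_one]
  refine le_min ?_ ?_
  · have hint : IntegrableOn (fun r => A * min (r ^ p) (r ^ q)) (Ioi 0) :=
      (integrableOn_min_rpow hp hq).const_mul A
    calc ∫ r in Ioi x, f r ≤ ∫ r in Ioi x, A * min (r ^ p) (r ^ q) :=
          hmono (hint.mono_set (Ioi_subset_Ioi hx.le)) hf
      _ ≤ ∫ r in Ioi 0, A * min (r ^ p) (r ^ q) := by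
        refine setIntegral_mono_set hint ?_ (Ioi_subset_Ioi hx.le).eventuallyLE
        filter_upwards [ae_restrict_mem measurableSet_Ioi] with r hr
        exact mul_nonneg hA (le_min (rpow_nonneg hr.le p) (rpow_nonneg hr.le q))
      _ ≤ A * (1 / (p + 1) - 1 / (q + 1)) := by
        rw [integral_const_mul]; exact mul_le_mul_of_nonneg_left (integral_min_rpow_le hp hq) hA
  · calc ∫ r in Ioi x, f r ≤ ∫ r in Ioi x, A * r ^ q :=
          hmono ((integrableOn_Ioi_rpow_of_lt hq hx).const_mul A)
            fun r hr => (hf r hr).trans (mul_le_mul_of_nonneg_left (min_le_right _ _) hA)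
      _ = A * (-(1 / (q + 1))) * x ^ (q + 1) := by
        rw [integral_const_mul, integral_Ioi_rpow_of_lt hq hx]; ring
      _ ≤ A * (1 / (p + 1) - 1 / (q + 1)) * x ^ (q + 1) := by
        gcongr; linarith

end

lemma min_one_sq {m : ℝ} (hm : 0 ≤ m) : min 1 (m ^ 2) = min 1 m ^ 2 := by
  rcases le_total m 1 with h | h
  · rw [min_eq_right h, min_eq_right (pow_le_one₀ hm h)]
  · rw [min_eq_left h, min_eq_left (one_le_pow₀ h), one_pow]

lemma sigOU_pos {H : ℝ} (hH : H ∈ Ioo (0 : ℝ) 1) : 0 < sigOU H :=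
  rpow_pos_of_pos (mul_pos two_pos (sin_pos_of_pos_of_lt_pi (mul_pos pi_pos hH.1)
    (mul_lt_of_lt_one_right pi_pos hH.2))) _

lemma setIntegral_Ioi_inv_mul_comp_div (g : ℝ → ℝ) {ε : ℝ} (hε : 0 < ε) (t : ℝ) :
    ∫ s in Ioi t, ε⁻¹ * g (s / ε) = ∫ r in Ioi (t / ε), g r := by
  simp_rw [div_eq_inv_mul]
  rw [integral_const_mul, integral_comp_mul_left_Ioi g t (inv_pos.2 hε), smul_eq_mul, inv_inv,
    ← mul_assoc, inv_mul_cancel₀ hε.ne', one_mul]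

lemma exists_sq_fouKernel_le {H : ℝ} (hH : H ∈ Ioo (0 : ℝ) (1 / 2)) :
    ∃ A > 0, ∀ r > 0, fouKernel H r ^ 2 ≤ A * min (r ^ (2 * H - 1)) (r ^ (2 * H - 3)) := by
  have ha : -1 < H - 1 / 2 := by linarith [hH.1]
  have ha0 : H - 1 / 2 ≤ 0 := by linarith [hH.2]
  set k := (sigOU H * Gamma (H + 1 / 2))⁻¹
  set D := 11 + 8 / (H - 1 / 2 + 1)
  have hk : 0 < k := by
    have := sigOU_pos ⟨hH.1, by linarith [hH.2]⟩
    have := Gamma_pos_of_pos (by linarith [hH.1] : 0 < H + 1 / 2)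
    positivity
  have hD : 0 < D := by
    have : 0 < H - 1 / 2 + 1 := by linarith
    positivity
  refine ⟨(k * D) ^ 2, by positivity, fun r hr => ?_⟩
  have hsq : ∀ b : ℝ, |fouProfile (H - 1 / 2) r| ≤ D * r ^ b →
      fouKernel H r ^ 2 ≤ (k * D) ^ 2 * r ^ (2 * b) := by
    intro b hb
    calc fouKernel H r ^ 2 = (k * |fouProfile (H - 1 / 2) r|) ^ 2 := by
          rw [mul_pow, sq_abs, ← mul_pow]; rfl
      _ ≤ (k * (D * r ^ b)) ^ 2 := by gcongr
      _ = (k * D) ^ 2 * r ^ (2 * b) := by rw [mul_comm 2 b, rpow_mul hr.le, rpow_two]; ring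
  rw [mul_min_of_nonneg _ _ (sq_nonneg _)]
  refine le_min ?_ ?_
  · simpa only [show 2 * (H - 1 / 2) = 2 * H - 1 by ring] using
      hsq _ (fouProfile.abs_le_rpow ha ha0 hr)
  · simpa only [show 2 * (H - 1 / 2 - 1) = 2 * H - 3 by ring] using
      hsq _ (fouProfile.abs_le_rpow_sub_one ha ha0 hr)

/-- Tail bound for the scaled kernel: for every `H ∈ (0,1/2)` there is `C > 0`
such that for all `ε ∈ (0,1]` and all `t > 0`,
`σ_ou ( ∫_t^∞ ε⁻¹ 𝒦(s/ε)² ds )^{1/2} ≤ C min(1, (ε/t)^{1−H})`,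
i.e. the tail quantity `σ^ε_{t,∞}` of `𝒦^ε(s) = ε^{-1/2} 𝒦(s/ε)` satisfies
`σ^ε_{t,∞} ≤ C (1 ∧ (ε/t)^{1−H})`. -/
theorem fouKernel_tail_bound (H : ℝ) (hH : H ∈ Set.Ioo (0 : ℝ) (1/2)) :
    ∃ C > (0 : ℝ), ∀ ε ∈ Set.Ioc (0 : ℝ) 1, ∀ t > (0 : ℝ),
      sigOU H *
          Real.sqrt (∫ s in Set.Ioi t, ε⁻¹ * (fouKernel H (s / ε)) ^ 2)
        ≤ C * min 1 ((ε / t) ^ (1 - H)) := by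
  obtain ⟨A, hA, hK⟩ := exists_sq_fouKernel_le hH
  have hσ : 0 < sigOU H := sigOU_pos ⟨hH.1, by linarith [hH.2]⟩
  set B := A * (1 / (2 * H - 1 + 1) - 1 / (2 * H - 3 + 1))
  have hB : 0 < B := by
    have : 0 < 1 / (2 * H - 1 + 1) := one_div_pos.mpr (by linarith [hH.1])
    have : 1 / (2 * H - 3 + 1) < 0 := one_div_neg.mpr (by linarith [hH.2])
    exact mul_pos hA (by linarith)
  refine ⟨sigOU H * sqrt B, by positivity, ?_⟩
  rintro ε ⟨hε, -⟩ t ht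
  have hεt : 0 ≤ ε / t := by positivity
  have hpow : (t / ε) ^ (2 * H - 3 + 1) = ((ε / t) ^ (1 - H)) ^ 2 := by
    rw [← inv_div, inv_rpow hεt, ← rpow_neg hεt, ← rpow_mul_natCast hεt]; ring_nf
  have htail : ∫ s in Ioi t, ε⁻¹ * fouKernel H (s / ε) ^ 2
      ≤ B * min 1 ((ε / t) ^ (1 - H)) ^ 2 := by
    rw [setIntegral_Ioi_inv_mul_comp_div (fun r => fouKernel H r ^ 2) hε t,
      ← min_one_sq (rpow_nonneg hεt _), ← hpow]
    exact setIntegral_Ioi_le_mul_min (by linarith [hH.1]) (by linarith [hH.2])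
      (fun r _ => sq_nonneg _) hK (div_pos ht hε)
  calc sigOU H * sqrt (∫ s in Ioi t, ε⁻¹ * fouKernel H (s / ε) ^ 2)
      ≤ sigOU H * sqrt (B * min 1 ((ε / t) ^ (1 - H)) ^ 2) := by gcongr
    _ = sigOU H * sqrt B * min 1 ((ε / t) ^ (1 - H)) := by
      rw [sqrt_mul hB.le, sqrt_sq (le_min zero_le_one (rpow_nonneg hεt _)), mul_assoc]
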